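/- For each integer n ≥ 11 with n ≡ 5 (mod 6), there exists a K_3-divisible graph G of order n whose complement has exactly (3n − 7)/2 edges and which has no K_3-decomposition. -/

import Mathlib

/-!
Let `H = sparseCompl n` be the graph on `{0, …, n-1}` made of a star from `0` to `{5, …, n-1}`,
the edges `15`, `16`, the triangle `234` and a perfect matching of `{7, …, n-1}`, and let `G = Hᶜ`.
Then `H` has `(3n-7)/2` edges, vertex `0` has degree `4` in `G` and every other vertex has degree
`n - 3`, and `n ≡ 5 (mod 6)` makes `|E(G)|` divisible by `3`. In `G` the neighbourhood of `0` is
`{1, 2, 3, 4}` and spans only the star `1–2, 1–3, 1–4`, so the triangles covering the edges `02`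
and `03` would both have to be `{0, 1, ·}`, covering the edge `01` twice.
-/

/-- A graph is `K_k`-divisible if `k(k-1)/2` divides its number of edges and `k-1`
divides every vertex degree. -/
def KkDivisible {V : Type*} (k : ℕ) (G : SimpleGraph V) : Prop :=
  (k * (k - 1) / 2) ∣ G.edgeSet.ncard ∧ ∀ x : V, (k - 1) ∣ (G.neighborSet x).ncard

/-- A `K_k`-decomposition of `G`: a set of `k`-cliques of `G` (i.e. subgraphs
isomorphic to `K_k`) such that every edge of `G` lies in exactly one of them. -/
def HasKkDecomposition {V : Type*} (k : ℕ) (G : SimpleGraph V) : Prop :=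
  ∃ D : Set (Finset V),
    (∀ A ∈ D, A.card = k ∧ ∀ x ∈ A, ∀ y ∈ A, x ≠ y → G.Adj x y) ∧
    (∀ x y : V, G.Adj x y → ∃! A, A ∈ D ∧ x ∈ A ∧ y ∈ A)

open Finset SimpleGraph

lemma Finset.exists_eq_insert_insert_singleton_of_card_eq_three {V : Type*} [DecidableEq V]
    {A : Finset V} (hA : #A = 3) {x y : V} (hx : x ∈ A) (hy : y ∈ A) (hxy : x ≠ y) :
    ∃ t, t ≠ x ∧ t ≠ y ∧ A = {x, y, t} := by
  have hy' : y ∈ A.erase x := mem_erase.mpr ⟨hxy.symm, hy⟩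
  obtain ⟨t, ht⟩ : ∃ t, (A.erase x).erase y = {t} := card_eq_one.mp <| by
    rw [card_erase_of_mem hy', card_erase_of_mem hx, hA]
  have htA : t ∈ (A.erase x).erase y := ht ▸ mem_singleton_self t
  refine ⟨t, (mem_erase.mp (mem_of_mem_erase htA)).1, (mem_erase.mp htA).1, ?_⟩
  rw [← insert_erase hx, ← insert_erase hy', ht]

section TriangleDecomposition

variable {V : Type*} {G : SimpleGraph V}

/-- If `w` is the only common neighbour of `v` with `a` and with `b`, then the triangles covering
`va` and `vb` are `vaw` and `vbw`, which share the edge `vw`. -/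
theorem not_hasKkDecomposition_three_of_unique_common_neighbor {v a b w : V}
    (ha : G.Adj v a) (hb : G.Adj v b) (hab : a ≠ b)
    (hwa : ∀ c, G.Adj v c → G.Adj a c → c = w) (hwb : ∀ c, G.Adj v c → G.Adj b c → c = w) :
    ¬ HasKkDecomposition 3 G := by
  classical
  rintro ⟨D, hD, huniq⟩
  have triangle : ∀ x, G.Adj v x → (∀ c, G.Adj v c → G.Adj x c → c = w) →
      ({v, x, w} : Finset V) ∈ D ∧ w ≠ x ∧ G.Adj v w := by
    intro x hx hw
    obtain ⟨A, ⟨hAD, hvA, hxA⟩, -⟩ := huniq v x hx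
    obtain ⟨hcard, hclique⟩ := hD A hAD
    obtain ⟨t, htv, htx, rfl⟩ :=
      exists_eq_insert_insert_singleton_of_card_eq_three hcard hvA hxA hx.ne
    have htA : t ∈ ({v, x, t} : Finset V) := by simp
    obtain rfl := hw t (hclique v hvA t htA htv.symm) (hclique x hxA t htA htx.symm)
    exact ⟨hAD, htx, hclique v hvA t htA htv.symm⟩
  obtain ⟨hA, -, hvw⟩ := triangle a ha hwa
  obtain ⟨hB, hwb', -⟩ := triangle b hb hwb
  obtain ⟨C, -, hC⟩ := huniq v w hvw
  have hAB : ({v, a, w} : Finset V) = {v, b, w} :=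
    (hC _ ⟨hA, by simp, by simp⟩).trans (hC _ ⟨hB, by simp, by simp⟩).symm
  have hbA : b ∈ ({v, a, w} : Finset V) := hAB ▸ by simp
  simp only [mem_insert, mem_singleton] at hbA
  rcases hbA with h | h | h
  · exact hb.ne h.symm
  · exact hab h.symm
  · exact hwb' h.symm

end TriangleDecomposition

lemma SimpleGraph.two_mul_card_edgeFinset_of_degree_eq {V : Type*} [Fintype V] [DecidableEq V]
    {G : SimpleGraph V} [DecidableRel G.Adj] (v : V) {d₀ d : ℕ} (hv : G.degree v = d₀)
    (h : ∀ x ≠ v, G.degree x = d) : 2 * #G.edgeFinset = d₀ + (Fintype.card V - 1) * d := by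
  rw [← sum_degrees_eq_twice_card_edges, ← add_sum_erase _ _ (mem_univ v), hv,
    sum_congr rfl fun x hx => h x (ne_of_mem_erase hx), sum_const, card_erase_of_mem (mem_univ v),
    card_univ, smul_eq_mul]

lemma SimpleGraph.degree_eq_two_of_adj_iff {V : Type*} [Fintype V] {G : SimpleGraph V}
    [DecidableRel G.Adj] {x a b : V} (hab : a ≠ b) (h : ∀ y, G.Adj x y ↔ y = a ∨ y = b) :
    G.degree x = 2 := by
  classical
  have : G.neighborFinset x = {a, b} := by ext y; simp [h]
  rw [← card_neighborFinset_eq_degree, this, card_pair hab]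

lemma SimpleGraph.ncard_edgeSet_eq_card_edgeFinset {V : Type*} (G : SimpleGraph V)
    [Fintype G.edgeSet] : G.edgeSet.ncard = #G.edgeFinset := by
  rw [← coe_edgeFinset, Set.ncard_coe_finset]

lemma SimpleGraph.ncard_neighborSet_eq_degree {V : Type*} (G : SimpleGraph V) (x : V)
    [Fintype (G.neighborSet x)] : (G.neighborSet x).ncard = G.degree x := by
  rw [Set.ncard_eq_toFinset_card']; rfl

def sparseCompl (n : ℕ) : SimpleGraph (Fin n) :=
  fromRel fun x y =>
    (x.val = 0 ∧ 5 ≤ y.val) ∨ (x.val = 1 ∧ (y.val = 5 ∨ y.val = 6)) ∨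
    (x.val = 2 ∧ (y.val = 3 ∨ y.val = 4)) ∨ (x.val = 3 ∧ y.val = 4) ∨
    (7 ≤ x.val ∧ x.val % 2 = 1 ∧ y.val = x.val + 1)

instance (n : ℕ) : DecidableRel (sparseCompl n).Adj :=
  fun _ _ => inferInstanceAs (Decidable (_ ∧ _))

namespace SparseCompl

variable {n : ℕ}

lemma degree_of_val_eq_zero {x : Fin n} (hx : x.val = 0) :
    (sparseCompl n).degree x = n - 5 := by
  have hnbr : (sparseCompl n).neighborFinset x =
      ({y : Fin n | ¬ (y : ℕ) < 5} : Finset (Fin n)) := by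
    ext y
    rw [mem_neighborFinset, mem_filter_univ]
    simp [sparseCompl, Fin.ext_iff, hx]
    omega
  rw [← card_neighborFinset_eq_degree, hnbr, filter_not, card_sdiff_of_subset (filter_subset _ _),
    Fin.card_filter_val_lt, card_univ, Fintype.card_fin]
  omega

lemma degree_of_val_ne_zero (hn : 7 ≤ n) (hodd : n % 2 = 1) {x : Fin n} (hx : x.val ≠ 0) :
    (sparseCompl n).degree x = 2 := by
  obtain ⟨a, b, ha, hb, hab, hadj⟩ : ∃ a b, a < n ∧ b < n ∧ a ≠ b ∧
      ∀ y : Fin n, (sparseCompl n).Adj x y ↔ y.val = a ∨ y.val = b := by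
    have hxn := x.isLt
    simp only [sparseCompl, fromRel_adj, ne_eq, Fin.ext_iff]
    rcases (by omega : x.val = 1 ∨ x.val = 2 ∨ x.val = 3 ∨ x.val = 4 ∨ x.val = 5 ∨ x.val = 6 ∨
        (7 ≤ x.val ∧ x.val % 2 = 1) ∨ (8 ≤ x.val ∧ x.val % 2 = 0))
      with h | h | h | h | h | h | h | h
    · exact ⟨5, 6, by omega, by omega, by omega, fun y => by omega⟩
    · exact ⟨3, 4, by omega, by omega, by omega, fun y => by omega⟩
    · exact ⟨2, 4, by omega, by omega, by omega, fun y => by omega⟩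
    · exact ⟨2, 3, by omega, by omega, by omega, fun y => by omega⟩
    · exact ⟨0, 1, by omega, by omega, by omega, fun y => by omega⟩
    · exact ⟨0, 1, by omega, by omega, by omega, fun y => by omega⟩
    · exact ⟨0, x.val + 1, by omega, by omega, by omega, fun y => by omega⟩
    · exact ⟨0, x.val - 1, by omega, by omega, by omega, fun y => by omega⟩
  refine degree_eq_two_of_adj_iff (a := ⟨a, ha⟩) (b := ⟨b, hb⟩) (by simpa [Fin.ext_iff]) ?_
  simpa [Fin.ext_iff] using hadj

lemma degree_compl_of_val_eq_zero (hn : 5 ≤ n) {x : Fin n} (hx : x.val = 0) :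
    (sparseCompl n)ᶜ.degree x = 4 := by
  rw [degree_compl, Fintype.card_fin, degree_of_val_eq_zero hx]
  omega

lemma degree_compl_of_val_ne_zero (hn : 7 ≤ n) (hodd : n % 2 = 1) {x : Fin n} (hx : x.val ≠ 0) :
    (sparseCompl n)ᶜ.degree x = n - 3 := by
  rw [degree_compl, Fintype.card_fin, degree_of_val_ne_zero hn hodd hx]
  omega

lemma two_mul_card_edgeFinset_add_seven (hn : 7 ≤ n) (hodd : n % 2 = 1) :
    2 * #(sparseCompl n).edgeFinset + 7 = 3 * n := by
  have h := two_mul_card_edgeFinset_of_degree_eq ⟨0, by omega⟩ (degree_of_val_eq_zero rfl)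
    fun x hx => degree_of_val_ne_zero hn hodd (by simpa [Fin.ext_iff] using hx)
  rw [Fintype.card_fin] at h
  omega

lemma two_mul_card_edgeFinset_compl (hn : 7 ≤ n) (hodd : n % 2 = 1) :
    2 * #(sparseCompl n)ᶜ.edgeFinset = 4 + (n - 1) * (n - 3) := by
  simpa using two_mul_card_edgeFinset_of_degree_eq ⟨0, by omega⟩
    (degree_compl_of_val_eq_zero (by omega) rfl)
    fun x hx => degree_compl_of_val_ne_zero hn hodd (by simpa [Fin.ext_iff] using hx)

lemma three_dvd_card_edgeFinset_compl (hn : 7 ≤ n) (hmod : n % 6 = 5) :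
    3 ∣ #(sparseCompl n)ᶜ.edgeFinset := by
  obtain ⟨m, rfl⟩ : ∃ m, n = 6 * m + 5 := ⟨n / 6, by omega⟩
  have h := two_mul_card_edgeFinset_compl (n := 6 * m + 5) (by omega) (by omega)
  rw [show 6 * m + 5 - 1 = 6 * m + 4 by omega, show 6 * m + 5 - 3 = 6 * m + 2 by omega] at h
  exact ⟨6 * m * m + 6 * m + 2, by nlinarith⟩

lemma two_dvd_degree_compl (hn : 7 ≤ n) (hodd : n % 2 = 1) (x : Fin n) :
    2 ∣ (sparseCompl n)ᶜ.degree x := by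
  by_cases hx : x.val = 0
  · simp [degree_compl_of_val_eq_zero (by omega) hx]
  · rw [degree_compl_of_val_ne_zero hn hodd hx]
    omega

lemma compl_adj_of_val_eq_zero {x y : Fin n} (hx : x.val = 0) :
    (sparseCompl n)ᶜ.Adj x y ↔ 1 ≤ y.val ∧ y.val ≤ 4 := by
  simp [sparseCompl, Fin.ext_iff, hx]
  omega

lemma compl_adj_of_two_le_val_le_four {x y : Fin n} (hx : 2 ≤ x.val ∧ x.val ≤ 4) :
    (sparseCompl n)ᶜ.Adj x y ↔ ¬ (2 ≤ y.val ∧ y.val ≤ 4) := by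
  simp [sparseCompl, Fin.ext_iff]
  omega

theorem not_hasKkDecomposition_three_compl (hn : 5 ≤ n) :
    ¬ HasKkDecomposition 3 (sparseCompl n)ᶜ := by
  refine not_hasKkDecomposition_three_of_unique_common_neighbor
    (v := ⟨0, by omega⟩) (a := ⟨2, by omega⟩) (b := ⟨3, by omega⟩) (w := ⟨1, by omega⟩)
    ?_ ?_ (by simp) (fun c => ?_) (fun c => ?_) <;>
  simp (disch := simp) only [compl_adj_of_val_eq_zero, compl_adj_of_two_le_val_le_four,
    Fin.ext_iff] <;>
  omega

end SparseCompl

open SparseCompl in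
/-- For each `n ≥ 11` with `n ≡ 5 (mod 6)` there is a `K_3`-divisible graph of order
`n` whose complement has exactly `(3n-7)/2` edges and which has no `K_3`-decomposition. -/
theorem nondecomposable_K3_five_mod_six (n : ℕ) (hn : 11 ≤ n) (hmod : n % 6 = 5) :
    ∃ G : SimpleGraph (Fin n), KkDivisible 3 G ∧
      ((Gᶜ.edgeSet.ncard : ℚ) = (3 * (n : ℚ) - 7) / 2) ∧ ¬ HasKkDecomposition 3 G := by
  have hn7 : 7 ≤ n := by omega
  have hodd : n % 2 = 1 := by omega
  refine ⟨(sparseCompl n)ᶜ, ⟨?_, fun x => ?_⟩, ?_, not_hasKkDecomposition_three_compl (by omega)⟩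
  · rw [ncard_edgeSet_eq_card_edgeFinset]
    exact three_dvd_card_edgeFinset_compl hn7 hmod
  · rw [ncard_neighborSet_eq_degree]
    exact two_dvd_degree_compl hn7 hodd x
  · have h : (2 * #(sparseCompl n).edgeFinset + 7 : ℚ) = 3 * n := by
      exact_mod_cast two_mul_card_edgeFinset_add_seven hn7 hodd
    rw [compl_compl, ncard_edgeSet_eq_card_edgeFinset]
    linarith
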